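/- Let G be an AH-algebra, let g ∈ G with spectral bounds L := L_g and U := U_g, spectral resolution (p_λ)_{λ∈ℝ} and eigenprojections (d_λ)_{λ∈ℝ}. Then for all λ,μ ∈ ℝ: (1) p_λ, d_λ ∈ P ∩ CC(g); (2) p_λg − λp_λ ≤ 0 ≤ (1−p_λ)g − λ(1−p_λ); (3) λ ≤ μ implies p_λ ≤ p_μ; (4) λ < μ implies d_λ ≤ p_λ ≤ 1−d_μ; (5) λ > U implies p_λ = 1, and λ < U implies p_λ < 1; (6) λ < L implies p_λ = 0, and L < λ implies 0 < p_λ; (7) if λ ≤ μ and q ∈ P with q ≤ p_μ − p_λ, then λq ≤ qgq ≤ μq. -/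

import Mathlib

/-- An e-ring `(R,E)`: an associative ring `R` with unity together with a set `E ⊆ R`
of effects, satisfying the Foulis axioms.  `E⁺` is realized as the additive submonoid
closure of `E` (the set of all finite sums of effects). -/
structure ERing (R : Type*) [Ring R] where
  E : Set R
  zero_mem : (0 : R) ∈ E
  one_mem : (1 : R) ∈ E
  compl_mem : ∀ e ∈ E, 1 - e ∈ E
  epos_i : ∀ a ∈ AddSubmonoid.closure E, -a ∈ AddSubmonoid.closure E → a = 0
  epos_ii : ∀ a ∈ AddSubmonoid.closure E, 1 - a ∈ AddSubmonoid.closure E → a ∈ E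
  epos_iii : ∀ a ∈ AddSubmonoid.closure E, ∀ b ∈ AddSubmonoid.closure E,
    a * b = b * a → a * b ∈ AddSubmonoid.closure E
  epos_iv : ∀ a ∈ AddSubmonoid.closure E, ∀ b ∈ AddSubmonoid.closure E,
    a * b * a ∈ AddSubmonoid.closure E
  epos_v : ∀ a ∈ AddSubmonoid.closure E, ∀ b ∈ AddSubmonoid.closure E,
    a * b * a = 0 → a * b = 0 ∧ b * a = 0
  epos_vi : ∀ a ∈ AddSubmonoid.closure E, ∀ b ∈ AddSubmonoid.closure E,
    (a - b) ^ 2 ∈ AddSubmonoid.closure E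
  zero_ne_one : (0 : R) ≠ 1

namespace ERing

variable {R : Type*} [Ring R] (er : ERing R)

/-- `E⁺`, the set of all finite sums of effects; the positive cone of the directed group. -/
def Epos : Set R := (AddSubmonoid.closure er.E : Set R)

/-- The directed group `G = E⁺ - E⁺` of the e-ring. -/
def G : Set R := {g | ∃ a ∈ er.Epos, ∃ b ∈ er.Epos, g = a - b}

/-- The partial order on the directed group: `g ≤ h` iff `h - g ∈ E⁺`. -/
def le (g h : R) : Prop := h - g ∈ er.Epos

/-- The set of projections `P = {p ∈ G : p = p²}`. -/
def P : Set R := {p | p ∈ er.G ∧ p = p ^ 2}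

/-- The commutant in `G` of a subset `A ⊆ G`. -/
def commutant (A : Set R) : Set R := {g | g ∈ er.G ∧ ∀ a ∈ A, g * a = a * g}

/-- The bicommutant in `G` of a subset `A ⊆ G`. -/
def CC (A : Set R) : Set R := er.commutant (er.commutant A)

/-- `s` is the supremum of `A` within the subset `S` (w.r.t. the e-ring order). -/
def IsSupIn (S A : Set R) (s : R) : Prop :=
  s ∈ S ∧ (∀ a ∈ A, er.le a s) ∧ ∀ b ∈ S, (∀ a ∈ A, er.le a b) → er.le s b

/-- `s` is the infimum of `A` within the subset `S` (w.r.t. the e-ring order). -/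
def IsInfIn (S A : Set R) (s : R) : Prop :=
  s ∈ S ∧ (∀ a ∈ A, er.le s a) ∧ ∀ b ∈ S, (∀ a ∈ A, er.le b a) → er.le b s

/-- Quadratic annihilation property. -/
def HasQA : Prop := ∀ g ∈ er.G, ∀ h ∈ er.G, g * h ^ 2 * g = 0 → g * h = 0 ∧ h * g = 0

/-- Commutative Vigier property: every ascending sequence of pairwise commuting elements
of `G` bounded above in `G` has a supremum in `G` which double commutes with the sequence. -/
def HasCV : Prop :=
  ∀ g : ℕ → R, (∀ n, g n ∈ er.G) → (∀ n, er.le (g n) (g (n + 1))) →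
    (∀ m n, g m * g n = g n * g m) → (∃ b ∈ er.G, ∀ n, er.le (g n) b) →
    ∃ s, er.IsSupIn er.G (Set.range g) s ∧ s ∈ er.CC (Set.range g)

/-- `G` is an abstract Hermitian (AH) algebra: there is a semitransparent effect `½`,
`G` has quadratic annihilation, and `G` has the commutative Vigier property. -/
def IsAH : Prop := (∃ h ∈ er.E, h + h = 1) ∧ er.HasQA ∧ er.HasCV

end ERing

namespace ERing

variable {R : Type*} [Ring R] (er : ERing R)

/-- `m` is the absolute value `|g| = (g²)^(1/2)` of `g`: `m ∈ G`, `0 ≤ m`, `m² = g²`. -/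
def IsAbs (g m : R) : Prop := m ∈ er.G ∧ er.le 0 m ∧ m ^ 2 = g ^ 2

/-- `a` is the positive part `g⁺ = ½(|g| + g)` of `g`, i.e. `a ∈ G` and `a + a = |g| + g`. -/
def IsPosPart (g a : R) : Prop := a ∈ er.G ∧ ∃ m, er.IsAbs g m ∧ a + a = m + g

/-- `b` is the negative part `g⁻ = ½(|g| − g)` of `g`, i.e. `b ∈ G` and `b + b = |g| − g`. -/
def IsNegPart (g b : R) : Prop := b ∈ er.G ∧ ∃ m, er.IsAbs g m ∧ b + b = m - g

/-- `p` is the carrier projection `g°` of `g`. -/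
def IsCarrier (g p : R) : Prop := p ∈ er.P ∧ ∀ h ∈ er.G, (g * h = 0 ↔ p * h = 0)

end ERing

namespace ERing

variable {R : Type*} [Ring R] [Algebra ℝ R] (er : ERing R)

/-- The 1-norm `‖g‖ = inf {λ : 0 ≤ λ, −λ·1 ≤ g ≤ λ·1}`. -/
noncomputable def norm1 (g : R) : ℝ :=
  sInf {l : ℝ | 0 ≤ l ∧ er.le (-(l • (1 : R))) g ∧ er.le g (l • (1 : R))}

/-- The spectral lower bound `L_g = sup {λ : λ·1 ≤ g}`. -/
noncomputable def specL (g : R) : ℝ := sSup {l : ℝ | er.le (l • (1 : R)) g}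

/-- The spectral upper bound `U_g = inf {λ : g ≤ λ·1}`. -/
noncomputable def specU (g : R) : ℝ := sInf {l : ℝ | er.le g (l • (1 : R))}

/-- `p` is the spectral projection `p_{g,λ} = 1 − ((g − λ·1)⁺)°`. -/
def IsSpecProj (g : R) (l : ℝ) (p : R) : Prop :=
  ∃ a, er.IsPosPart (g - l • (1 : R)) a ∧ ∃ q, er.IsCarrier a q ∧ p = 1 - q

/-- `d` is the λ-eigenprojection `d_{g,λ} = 1 − (g − λ·1)°`. -/
def IsEigenProj (g : R) (l : ℝ) (d : R) : Prop :=
  ∃ q, er.IsCarrier (g - l • (1 : R)) q ∧ d = 1 - q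

end ERing

/-!
Write `b = g - λ`. The absolute value `|b|` is the positive square root of `b²`, obtained (after
scaling `b²` below `1`) as the supremum of the monotone iteration `xₙ₊₁ = xₙ + ½(c - xₙ²)`; the
commutative Vigier property puts it in the bicommutant of `b`. Hence `b = b⁺ - b⁻` with
`b⁺ b⁻ = 0`, and the carrier `q = 1 - p_λ` of `b⁺` fixes `b⁺` and kills `b⁻`: `q b = b⁺ ≥ 0` and
`p_λ b = -b⁻ ≤ 0`, all inside `CC(g)`. Every remaining item is an instance of "an element that is
both `≥ 0` and `≤ 0` vanishes", followed by the carrier property of `1 - p_λ` or of `1 - d_λ`.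
-/

lemma Commute.sub_smul_one_right {R : Type*} [Ring R] [Algebra ℝ R] {k g : R}
    (hkg : Commute k g) (t : ℝ) : Commute k (g - t • 1) :=
  hkg.sub_right ((Commute.one_right k).smul_right t)

namespace ERing

section Cone

variable {R : Type*} [Ring R] (er : ERing R)

lemma mem_Epos_of_mem_E {e : R} (he : e ∈ er.E) : e ∈ er.Epos :=
  AddSubmonoid.subset_closure he

lemma zero_mem_Epos : (0 : R) ∈ er.Epos := (AddSubmonoid.closure er.E).zero_mem

lemma one_mem_Epos : (1 : R) ∈ er.Epos := er.mem_Epos_of_mem_E er.one_mem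

lemma add_mem_Epos {a b : R} (ha : a ∈ er.Epos) (hb : b ∈ er.Epos) : a + b ∈ er.Epos :=
  (AddSubmonoid.closure er.E).add_mem ha hb

lemma eq_zero_of_mem_Epos_of_neg_mem {a : R} (ha : a ∈ er.Epos) (h : -a ∈ er.Epos) : a = 0 :=
  er.epos_i a ha h

lemma eq_zero_of_add_eq_zero {a b : R} (ha : a ∈ er.Epos) (hb : b ∈ er.Epos) (h : a + b = 0) :
    a = 0 :=
  er.eq_zero_of_mem_Epos_of_neg_mem ha (by rwa [neg_eq_of_add_eq_zero_right h])

lemma mul_mem_Epos {a b : R} (ha : a ∈ er.Epos) (hb : b ∈ er.Epos) (h : Commute a b) :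
    a * b ∈ er.Epos :=
  er.epos_iii a ha b hb h

lemma mul_mul_self_mem_Epos {a b : R} (ha : a ∈ er.Epos) (hb : b ∈ er.Epos) :
    a * b * a ∈ er.Epos :=
  er.epos_iv a ha b hb

lemma mem_G_of_mem_Epos {a : R} (ha : a ∈ er.Epos) : a ∈ er.G :=
  ⟨a, ha, 0, er.zero_mem_Epos, (sub_zero a).symm⟩

lemma zero_mem_G : (0 : R) ∈ er.G := er.mem_G_of_mem_Epos er.zero_mem_Epos

lemma one_mem_G : (1 : R) ∈ er.G := er.mem_G_of_mem_Epos er.one_mem_Epos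

lemma add_mem_G {x y : R} (hx : x ∈ er.G) (hy : y ∈ er.G) : x + y ∈ er.G := by
  obtain ⟨a, ha, b, hb, rfl⟩ := hx
  obtain ⟨c, hc, d, hd, rfl⟩ := hy
  exact ⟨a + c, er.add_mem_Epos ha hc, b + d, er.add_mem_Epos hb hd, by abel⟩

lemma neg_mem_G {x : R} (hx : x ∈ er.G) : -x ∈ er.G := by
  obtain ⟨a, ha, b, hb, rfl⟩ := hx
  exact ⟨b, hb, a, ha, neg_sub a b⟩

lemma sub_mem_G {x y : R} (hx : x ∈ er.G) (hy : y ∈ er.G) : x - y ∈ er.G := by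
  simpa only [sub_eq_add_neg] using er.add_mem_G hx (er.neg_mem_G hy)

lemma mul_self_mem_Epos {x : R} (hx : x ∈ er.G) : x * x ∈ er.Epos := by
  obtain ⟨a, ha, b, hb, rfl⟩ := hx
  rw [← sq]
  exact er.epos_vi a ha b hb

lemma mul_add_mul_mem_G {x y : R} (hx : x ∈ er.G) (hy : y ∈ er.G) : x * y + y * x ∈ er.G := by
  rw [show x * y + y * x = (x + y) * (x + y) - (x * x + y * y) by noncomm_ring]
  exact er.sub_mem_G (er.mem_G_of_mem_Epos (er.mul_self_mem_Epos (er.add_mem_G hx hy)))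
    (er.mem_G_of_mem_Epos (er.add_mem_Epos (er.mul_self_mem_Epos hx) (er.mul_self_mem_Epos hy)))

lemma le_trans {x y z : R} (hxy : er.le x y) (hyz : er.le y z) : er.le x z := by
  simpa only [le, sub_add_sub_cancel'] using er.add_mem_Epos hxy hyz

end Cone

section Projection

variable {R : Type*} [Ring R] (er : ERing R)

lemma isIdempotentElem_of_mem_P {p : R} (hp : p ∈ er.P) : IsIdempotentElem p := by
  rw [IsIdempotentElem, ← sq]; exact hp.2.symm

lemma mem_P_iff {p : R} : p ∈ er.P ↔ p ∈ er.G ∧ IsIdempotentElem p := by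
  rw [IsIdempotentElem, ← sq, eq_comm]; rfl

lemma mem_Epos_of_mem_P {p : R} (hp : p ∈ er.P) : p ∈ er.Epos := by
  rw [← er.isIdempotentElem_of_mem_P hp]; exact er.mul_self_mem_Epos hp.1

lemma zero_le_of_mem_P {p : R} (hp : p ∈ er.P) : er.le 0 p := by
  rw [le, sub_zero]; exact er.mem_Epos_of_mem_P hp

lemma one_sub_mem_P {p : R} (hp : p ∈ er.P) : 1 - p ∈ er.P :=
  (er.mem_P_iff).2 ⟨er.sub_mem_G er.one_mem_G hp.1, (er.isIdempotentElem_of_mem_P hp).one_sub⟩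

lemma le_one_of_mem_P {p : R} (hp : p ∈ er.P) : er.le p 1 :=
  er.mem_Epos_of_mem_P (er.one_sub_mem_P hp)

lemma sub_mem_P {p r : R} (hp : p ∈ er.P) (hr : r ∈ er.P) (hpr : p * r = p) (hrp : r * p = p) :
    r - p ∈ er.P := by
  refine (er.mem_P_iff).2 ⟨er.sub_mem_G hr.1 hp.1, ?_⟩
  have hp2 := er.isIdempotentElem_of_mem_P hp
  have hr2 := er.isIdempotentElem_of_mem_P hr
  rw [IsIdempotentElem, mul_sub, sub_mul, sub_mul, hr2.eq, hp2.eq, hpr, hrp, sub_self, sub_zero]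

lemma le_of_mul_eq {p r : R} (hp : p ∈ er.P) (hr : r ∈ er.P) (hpr : p * r = p)
    (hrp : r * p = p) : er.le p r :=
  er.mem_Epos_of_mem_P (er.sub_mem_P hp hr hpr hrp)

/-- Compressing `w ≤ e` by the complement of `e` gives `±(1 - e) w (1 - e) ≥ 0`. -/
lemma mul_eq_of_le {w e : R} (hw : w ∈ er.P) (he : e ∈ er.P) (hwe : er.le w e) :
    e * w = w ∧ w * e = w := by
  have he' := er.mem_Epos_of_mem_P (er.one_sub_mem_P he)
  have hw' := er.mem_Epos_of_mem_P hw
  have hee := er.isIdempotentElem_of_mem_P he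
  have hconj : (1 - e) * w * (1 - e) = 0 := by
    refine er.eq_zero_of_mem_Epos_of_neg_mem (er.mul_mul_self_mem_Epos he' hw') ?_
    have h : -((1 - e) * w * (1 - e)) = (1 - e) * (e - w) * (1 - e) := by
      rw [mul_sub (1 - e) e w, sub_mul ((1 - e) * e), hee.one_sub_mul_self, zero_mul, zero_sub]
    rw [h]
    exact er.mul_mul_self_mem_Epos he' hwe
  obtain ⟨h1, h2⟩ := er.epos_v _ he' _ hw' hconj
  rw [sub_mul, one_mul, sub_eq_zero] at h1
  rw [mul_sub, mul_one, sub_eq_zero] at h2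
  exact ⟨h1.symm, h2.symm⟩

lemma mul_mul_self_mem_Epos_of_le {w e x : R} (hw : w ∈ er.P) (he : e ∈ er.P) (hwe : er.le w e)
    (hex : e * x ∈ er.Epos) : w * x * w ∈ er.Epos := by
  have h : w * x * w = w * (e * x) * w := by rw [← mul_assoc, (er.mul_eq_of_le hw he hwe).2]
  rw [h]
  exact er.mul_mul_self_mem_Epos (er.mem_Epos_of_mem_P hw) hex

end Projection

section Scalar

variable {R : Type*} [Ring R] [Algebra ℝ R] (er : ERing R)

def SMulClosed : Prop := ∀ t : ℝ, 0 ≤ t → ∀ a ∈ er.Epos, t • a ∈ er.Epos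

lemma smul_mem_G (hscal : er.SMulClosed) (t : ℝ) {x : R} (hx : x ∈ er.G) : t • x ∈ er.G := by
  obtain ⟨a, ha, b, hb, rfl⟩ := hx
  rcases le_total 0 t with ht | ht
  · exact ⟨t • a, hscal t ht a ha, t • b, hscal t ht b hb, smul_sub t a b⟩
  · refine ⟨(-t) • b, hscal (-t) (neg_nonneg.2 ht) b hb, (-t) • a,
      hscal (-t) (neg_nonneg.2 ht) a ha, ?_⟩
    rw [smul_sub, neg_smul, neg_smul, neg_sub_neg]

lemma sub_smul_one_mem_G (hscal : er.SMulClosed) {g : R} (hg : g ∈ er.G) (t : ℝ) :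
    g - t • (1 : R) ∈ er.G :=
  er.sub_mem_G hg (er.smul_mem_G hscal t er.one_mem_G)

lemma exists_smul_one_sub_mem_Epos {c : R} (hc : c ∈ er.Epos) :
    ∃ t : ℝ, 0 < t ∧ t • (1 : R) - c ∈ er.Epos := by
  induction hc using AddSubmonoid.closure_induction with
  | mem e he =>
    exact ⟨1, one_pos, by rw [one_smul]; exact er.mem_Epos_of_mem_E (er.compl_mem e he)⟩
  | zero => exact ⟨1, one_pos, by rw [one_smul, sub_zero]; exact er.one_mem_Epos⟩
  | add a b _ _ iha ihb =>
    obtain ⟨s, hs0, hs⟩ := iha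
    obtain ⟨t, ht0, ht⟩ := ihb
    refine ⟨s + t, add_pos hs0 ht0, ?_⟩
    rw [add_smul, add_sub_add_comm]
    exact er.add_mem_Epos hs ht

lemma exists_le_smul_one {g : R} (hg : g ∈ er.G) : ∃ t : ℝ, er.le g (t • 1) := by
  obtain ⟨a, ha, b, hb, rfl⟩ := hg
  obtain ⟨t, -, ht⟩ := er.exists_smul_one_sub_mem_Epos ha
  refine ⟨t, ?_⟩
  rw [le, sub_sub_eq_add_sub, add_comm, add_sub_assoc]
  exact er.add_mem_Epos hb ht

lemma exists_smul_one_le {g : R} (hg : g ∈ er.G) : ∃ t : ℝ, er.le (t • 1) g := by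
  obtain ⟨t, ht⟩ := er.exists_le_smul_one (er.neg_mem_G hg)
  refine ⟨-t, ?_⟩
  rwa [le, neg_smul, sub_neg_eq_add, add_comm, ← sub_neg_eq_add]

lemma le_of_smul_one_le_smul_one (hscal : er.SMulClosed) {s t : ℝ}
    (h : er.le (s • (1 : R)) (t • 1)) : s ≤ t := by
  by_contra! hts
  have hneg : -((t - s) • (1 : R)) ∈ er.Epos := by
    rw [← neg_smul, neg_sub]
    exact hscal _ (sub_nonneg.2 hts.le) _ er.one_mem_Epos
  have h0 := er.eq_zero_of_mem_Epos_of_neg_mem (by rwa [sub_smul]) hneg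
  exact sub_ne_zero.2 hts.ne ((smul_eq_zero.1 h0).resolve_right er.zero_ne_one.symm)

lemma specU_le (hscal : er.SMulClosed) {g : R} (hg : g ∈ er.G) {l : ℝ}
    (h : er.le g (l • 1)) : er.specU g ≤ l := by
  obtain ⟨s, hs⟩ := er.exists_smul_one_le hg
  exact csInf_le ⟨s, fun t ht => er.le_of_smul_one_le_smul_one hscal (er.le_trans hs ht)⟩ h

lemma le_specL (hscal : er.SMulClosed) {g : R} (hg : g ∈ er.G) {l : ℝ}
    (h : er.le (l • 1) g) : l ≤ er.specL g := by
  obtain ⟨s, hs⟩ := er.exists_le_smul_one hg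
  exact le_csSup ⟨s, fun t ht => er.le_of_smul_one_le_smul_one hscal (er.le_trans ht hs)⟩ h

lemma exists_le_smul_one_lt_of_specU_lt {g : R} (hg : g ∈ er.G) {l : ℝ} (h : er.specU g < l) :
    ∃ t < l, er.le g (t • 1) := by
  obtain ⟨t, ht, htl⟩ := exists_lt_of_csInf_lt (er.exists_le_smul_one hg) h
  exact ⟨t, htl, ht⟩

lemma exists_lt_smul_one_le_of_lt_specL {g : R} (hg : g ∈ er.G) {l : ℝ} (h : l < er.specL g) :
    ∃ t > l, er.le (t • 1) g := by
  obtain ⟨t, ht, hlt⟩ := exists_lt_of_lt_csSup (er.exists_smul_one_le hg) h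
  exact ⟨t, hlt, ht⟩

lemma eq_zero_of_mul_mem_Epos_of_le (hscal : er.SMulClosed) {r x : R} (hr : r ∈ er.P)
    (hrx : Commute r x) (hpos : r * x ∈ er.Epos) {s : ℝ} (hle : er.le x (s • 1)) (hs : s < 0) :
    r = 0 := by
  have hrr := er.isIdempotentElem_of_mem_P hr
  have hr' := er.mem_Epos_of_mem_P hr
  have hconj : r * (s • 1 - x) * r = s • r - r * x := by
    rw [mul_sub, sub_mul, mul_smul_comm, mul_one, smul_mul_assoc, hrr.eq, mul_assoc, ← hrx.eq,
      ← mul_assoc, hrr.eq]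
  have hsr : s • r ∈ er.Epos := by
    rw [← sub_add_cancel (s • r) (r * x), ← hconj]
    exact er.add_mem_Epos (er.mul_mul_self_mem_Epos hr' hle) hpos
  have h0 := er.eq_zero_of_mem_Epos_of_neg_mem hsr
    (by rw [← neg_smul]; exact hscal _ (neg_nonneg.2 hs.le) _ hr')
  exact (smul_eq_zero.1 h0).resolve_left hs.ne

end Scalar

section Annihilation

variable {R : Type*} [Ring R] (er : ERing R)

lemma mul_eq_zero_comm (hQA : er.HasQA) {x y : R} (hx : x ∈ er.G) (hy : y ∈ er.G)
    (h : x * y = 0) : y * x = 0 :=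
  (hQA x hx y hy (by rw [sq, ← mul_assoc, h, zero_mul, zero_mul])).2

lemma eq_zero_of_mul_self_eq_zero (hQA : er.HasQA) {x : R} (hx : x ∈ er.G) (h : x * x = 0) :
    x = 0 := by
  simpa using (hQA x hx 1 er.one_mem_G (by rw [one_pow, mul_one, h])).1

lemma eq_of_mul_self_eq (hQA : er.HasQA) {s t : R} (hs : s ∈ er.Epos) (ht : t ∈ er.Epos)
    (hst : Commute s t) (h : s * s = t * t) : s = t := by
  have hw : s - t ∈ er.G := er.sub_mem_G (er.mem_G_of_mem_Epos hs) (er.mem_G_of_mem_Epos ht)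
  have hww := er.mul_self_mem_Epos hw
  have hsw : Commute s (s - t) := (Commute.refl s).sub_right hst
  have htw : Commute t (s - t) := hst.symm.sub_right (Commute.refl t)
  have hsum : s * ((s - t) * (s - t)) + t * ((s - t) * (s - t)) = 0 := by
    rw [← add_mul, ← mul_assoc, ← hst.mul_self_sub_mul_self_eq, h, sub_self, zero_mul]
  have hs0 := er.eq_zero_of_add_eq_zero (er.mul_mem_Epos hs hww (hsw.mul_right hsw))
    (er.mul_mem_Epos ht hww (htw.mul_right htw)) hsum
  have ht0 := er.eq_zero_of_add_eq_zero (er.mul_mem_Epos ht hww (htw.mul_right htw))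
    (er.mul_mem_Epos hs hww (hsw.mul_right hsw)) ((add_comm _ _).trans hsum)
  have hcube : (s - t) * ((s - t) * (s - t)) = 0 := by rw [sub_mul, hs0, ht0, sub_zero]
  have hsq : (s - t) * (s - t) = 0 := by
    simpa using (er.epos_v _ hww 1 er.one_mem_Epos (by rw [mul_one, mul_assoc, hcube, mul_zero])).1
  exact sub_eq_zero.1 (er.eq_zero_of_mul_self_eq_zero hQA hw hsq)

variable {er} {a q : R}

lemma IsCarrier.mul_carrier (hq : er.IsCarrier a q) : a * q = a := by
  have h := (hq.2 _ (er.one_sub_mem_P hq.1).1).2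
    (er.isIdempotentElem_of_mem_P hq.1).mul_one_sub_self
  rw [mul_sub, mul_one, sub_eq_zero] at h
  exact h.symm

lemma IsCarrier.carrier_mul (hQA : er.HasQA) (ha : a ∈ er.G) (hq : er.IsCarrier a q) :
    q * a = a := by
  have h1q := (er.one_sub_mem_P hq.1).1
  have h := er.mul_eq_zero_comm hQA ha h1q (by rw [mul_sub, mul_one, hq.mul_carrier, sub_self])
  rw [sub_mul, one_mul, sub_eq_zero] at h
  exact h.symm

/-- `j = k(1 - q) + (1 - q)k` is annihilated by `a`, hence by `q`; this forces
`qk(1 - q) = 0 = (1 - q)kq`. -/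
lemma IsCarrier.commute (hQA : er.HasQA) (hq : er.IsCarrier a q) {k : R}
    (hk : k ∈ er.G) (hka : Commute k a) : Commute k q := by
  have hqq := er.isIdempotentElem_of_mem_P hq.1
  have hj : k * (1 - q) + (1 - q) * k ∈ er.G := er.mul_add_mul_mem_G hk (er.one_sub_mem_P hq.1).1
  have ha1q : a * (1 - q) = 0 := by rw [mul_sub, mul_one, hq.mul_carrier, sub_self]
  have haj : a * (k * (1 - q) + (1 - q) * k) = 0 := by
    rw [mul_add, ← mul_assoc, ← hka.eq, mul_assoc, ha1q, ← mul_assoc, ha1q, mul_zero, zero_mul,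
      add_zero]
  have hqj := (hq.2 _ hj).1 haj
  have hjq := er.mul_eq_zero_comm hQA hq.1.1 hj hqj
  have hleft : q * k * (1 - q) = 0 := by
    rwa [mul_add, ← mul_assoc, ← mul_assoc, hqq.mul_one_sub_self, zero_mul, add_zero] at hqj
  have hright : (1 - q) * k * q = 0 := by
    rwa [add_mul, mul_assoc, hqq.one_sub_mul_self, mul_zero, zero_add] at hjq
  rw [mul_sub, mul_one, sub_eq_zero] at hleft
  rw [sub_mul, sub_mul, one_mul, sub_eq_zero] at hright
  exact hright.trans hleft.symm

end Annihilation

/-- Increasing with supremum `√c` when `0 ≤ c ≤ 1`. -/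
noncomputable def sqrtSeq {R : Type*} [Ring R] [Algebra ℝ R] (c : R) : ℕ → R
  | 0 => 0
  | n + 1 => sqrtSeq c n + (2⁻¹ : ℝ) • (c - sqrtSeq c n * sqrtSeq c n)

lemma sub_mul_self_add_half_smul {R : Type*} [Ring R] [Algebra ℝ R] {x y : R}
    (hxy : Commute x y) :
    y + x * x - (x + (2⁻¹ : ℝ) • y) * (x + (2⁻¹ : ℝ) • y) =
      (2⁻¹ : ℝ) • (y * (1 - x) + y * (1 - (x + (2⁻¹ : ℝ) • y))) := by
  simp only [mul_add, add_mul, mul_sub, mul_one, smul_mul_assoc, mul_smul_comm, smul_smul,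
    smul_sub, smul_add, hxy.eq]
  module

section Sqrt

variable {R : Type*} [Ring R] [Algebra ℝ R] (er : ERing R) {c : R}

lemma commute_sqrtSeq {k : R} (hkc : Commute k c) (n : ℕ) : Commute k (sqrtSeq c n) := by
  induction n with
  | zero => exact Commute.zero_right k
  | succ n ih => exact ih.add_right ((hkc.sub_right (ih.mul_right ih)).smul_right _)

lemma sqrtSeq_mem_G (hscal : er.SMulClosed) (hc : c ∈ er.G) (n : ℕ) : sqrtSeq c n ∈ er.G := by
  induction n with
  | zero => exact er.zero_mem_G
  | succ n ih =>
    exact er.add_mem_G ih (er.smul_mem_G hscal _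
      (er.sub_mem_G hc (er.mem_G_of_mem_Epos (er.mul_self_mem_Epos ih))))

lemma sqrtSeq_le_one (hscal : er.SMulClosed) (hc : c ∈ er.G) (hc1 : er.le c 1) (n : ℕ) :
    er.le (sqrtSeq c n) 1 := by
  induction n with
  | zero => simpa [le, sqrtSeq] using er.one_mem_Epos
  | succ n ih =>
    have hx := er.sqrtSeq_mem_G hscal hc n
    have h : 1 - sqrtSeq c (n + 1) =
        (2⁻¹ : ℝ) • ((1 - sqrtSeq c n) * (1 - sqrtSeq c n) + (1 - c)) := by
      simp only [sqrtSeq, sub_mul, mul_sub, one_mul, mul_one]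
      module
    rw [le, h]
    exact hscal _ (by norm_num) _
      (er.add_mem_Epos (er.mul_self_mem_Epos (er.sub_mem_G er.one_mem_G hx)) hc1)

lemma mul_self_sqrtSeq_le (hscal : er.SMulClosed) (hc : c ∈ er.Epos) (hc1 : er.le c 1)
    (n : ℕ) : er.le (sqrtSeq c n * sqrtSeq c n) c := by
  have hcG := er.mem_G_of_mem_Epos hc
  induction n with
  | zero => simpa [le, sqrtSeq] using hc
  | succ n ih =>
    have hxc : Commute (sqrtSeq c n) c := (commute_sqrtSeq (Commute.refl c) n).symm
    have hxy : Commute (sqrtSeq c n) (c - sqrtSeq c n * sqrtSeq c n) :=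
      hxc.sub_right ((Commute.refl _).mul_right (Commute.refl _))
    have hcy : Commute c (c - sqrtSeq c n * sqrtSeq c n) :=
      (Commute.refl c).sub_right (hxc.symm.mul_right hxc.symm)
    have h : c - sqrtSeq c (n + 1) * sqrtSeq c (n + 1) =
        (2⁻¹ : ℝ) • ((c - sqrtSeq c n * sqrtSeq c n) * (1 - sqrtSeq c n) +
          (c - sqrtSeq c n * sqrtSeq c n) * (1 - sqrtSeq c (n + 1))) := by
      have := sub_mul_self_add_half_smul hxy
      rwa [sub_add_cancel] at this
    rw [le, h]
    refine hscal _ (by norm_num) _ (er.add_mem_Epos (er.mul_mem_Epos ih ?_ ?_)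
      (er.mul_mem_Epos ih ?_ ?_))
    · exact er.sqrtSeq_le_one hscal hcG hc1 n
    · exact (Commute.one_right _).sub_right hxy.symm
    · exact er.sqrtSeq_le_one hscal hcG hc1 (n + 1)
    · exact (Commute.one_right _).sub_right (commute_sqrtSeq hcy.symm (n + 1))

lemma sqrtSeq_le_succ (hscal : er.SMulClosed) (hc : c ∈ er.Epos) (hc1 : er.le c 1) (n : ℕ) :
    er.le (sqrtSeq c n) (sqrtSeq c (n + 1)) := by
  rw [le, sqrtSeq, add_sub_cancel_left]
  exact hscal _ (by norm_num) _ (er.mul_self_sqrtSeq_le hscal hc hc1 n)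

lemma sqrtSeq_mem_Epos (hscal : er.SMulClosed) (hc : c ∈ er.Epos) (hc1 : er.le c 1) (n : ℕ) :
    sqrtSeq c n ∈ er.Epos := by
  induction n with
  | zero => exact er.zero_mem_Epos
  | succ n ih => simpa using er.add_mem_Epos ih (er.sqrtSeq_le_succ hscal hc hc1 n)

lemma mul_self_sub_le_two_smul (hscal : er.SMulClosed) (hc : c ∈ er.Epos) (hc1 : er.le c 1)
    {s : R} (hs1 : er.le s 1) {n : ℕ} (hxs : er.le (sqrtSeq c n) s)
    (hsx : Commute s (sqrtSeq c n)) : er.le (s * s - c) ((2 : ℝ) • (s - sqrtSeq c n)) := by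
  have h : (2 : ℝ) • (s - sqrtSeq c n) - (s * s - c) =
      (s - sqrtSeq c n) * ((1 - s) + (1 - sqrtSeq c n)) + (c - sqrtSeq c n * sqrtSeq c n) := by
    simp only [mul_add, mul_sub, sub_mul, mul_one, hsx.eq]
    module
  rw [le, h]
  refine er.add_mem_Epos (er.mul_mem_Epos hxs (er.add_mem_Epos hs1
    (er.sqrtSeq_le_one hscal (er.mem_G_of_mem_Epos hc) hc1 n)) ?_)
    (er.mul_self_sqrtSeq_le hscal hc hc1 n)
  exact ((Commute.one_right _).sub_right ((Commute.refl s).sub_left hsx.symm)).add_right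
    ((Commute.one_right _).sub_right (hsx.sub_left (Commute.refl _)))

lemma neg_mul_self_sub_le_two_smul (hscal : er.SMulClosed) (hc : c ∈ er.Epos) (hc1 : er.le c 1)
    {s : R} (hs0 : s ∈ er.Epos) {n : ℕ} (hxs : ∀ m, er.le (sqrtSeq c m) s)
    (hsx : Commute s (sqrtSeq c n)) : er.le (-(s * s - c)) ((2 : ℝ) • (s - sqrtSeq c n)) := by
  have h : (2 : ℝ) • (s - sqrtSeq c n) - -(s * s - c) =
      (s - sqrtSeq c n) * (s + sqrtSeq c n) + (2 : ℝ) • (s - sqrtSeq c (n + 1)) := by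
    simp only [sqrtSeq, mul_add, sub_mul, hsx.eq]
    module
  rw [le, h]
  exact er.add_mem_Epos (er.mul_mem_Epos (hxs n)
    (er.add_mem_Epos hs0 (er.sqrtSeq_mem_Epos hscal hc hc1 n))
    (((Commute.refl s).sub_left hsx.symm).add_right (hsx.sub_left (Commute.refl _))))
    (hscal 2 zero_le_two _ (hxs (n + 1)))

/-- Both `s - ½(s² - c)` and `s + ½(s² - c)` bound every `xₙ`, so `s ≤ s ∓ ½(s² - c)`. -/
lemma mul_self_eq_of_isSupIn_sqrtSeq (hscal : er.SMulClosed) (hc : c ∈ er.Epos)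
    (hc1 : er.le c 1) {s : R} (hs : er.IsSupIn er.G (Set.range (sqrtSeq c)) s)
    (hsx : ∀ n, Commute s (sqrtSeq c n)) : s * s = c := by
  have hxs : ∀ n, er.le (sqrtSeq c n) s := fun n => hs.2.1 _ ⟨n, rfl⟩
  have hs1 : er.le s 1 := hs.2.2 1 er.one_mem_G (by
    rintro _ ⟨n, rfl⟩; exact er.sqrtSeq_le_one hscal (er.mem_G_of_mem_Epos hc) hc1 n)
  have hs0 : s ∈ er.Epos := by simpa [le, sqrtSeq] using hxs 0
  have hzG : (2⁻¹ : ℝ) • (s * s - c) ∈ er.G := er.smul_mem_G hscal _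
    (er.sub_mem_G (er.mem_G_of_mem_Epos (er.mul_self_mem_Epos hs.1)) (er.mem_G_of_mem_Epos hc))
  have hneg : er.le s (s - (2⁻¹ : ℝ) • (s * s - c)) := by
    refine hs.2.2 _ (er.sub_mem_G hs.1 hzG) ?_
    rintro _ ⟨n, rfl⟩
    rw [le, show s - (2⁻¹ : ℝ) • (s * s - c) - sqrtSeq c n =
      (2⁻¹ : ℝ) • ((2 : ℝ) • (s - sqrtSeq c n) - (s * s - c)) by module]
    exact hscal _ (by norm_num) _ (er.mul_self_sub_le_two_smul hscal hc hc1 hs1 (hxs n) (hsx n))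
  have hpos : er.le s (s + (2⁻¹ : ℝ) • (s * s - c)) := by
    refine hs.2.2 _ (er.add_mem_G hs.1 hzG) ?_
    rintro _ ⟨n, rfl⟩
    rw [le, show s + (2⁻¹ : ℝ) • (s * s - c) - sqrtSeq c n =
      (2⁻¹ : ℝ) • ((2 : ℝ) • (s - sqrtSeq c n) - -(s * s - c)) by module]
    exact hscal _ (by norm_num) _ (er.neg_mul_self_sub_le_two_smul hscal hc hc1 hs0 hxs (hsx n))
  rw [le, sub_sub_cancel_left] at hneg
  rw [le, add_sub_cancel_left] at hpos
  have hz := er.eq_zero_of_mem_Epos_of_neg_mem hpos hneg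
  rwa [smul_eq_zero_iff_right (by norm_num), sub_eq_zero] at hz

lemma exists_sqrt_of_le_one (hscal : er.SMulClosed) (hCV : er.HasCV) (hc : c ∈ er.Epos)
    (hc1 : er.le c 1) :
    ∃ s ∈ er.Epos, s * s = c ∧ ∀ k ∈ er.G, Commute k c → Commute k s := by
  have hxG := er.sqrtSeq_mem_G hscal (er.mem_G_of_mem_Epos hc)
  have hxx : ∀ m n, Commute (sqrtSeq c m) (sqrtSeq c n) :=
    fun m n => commute_sqrtSeq (commute_sqrtSeq (Commute.refl c) m).symm n
  obtain ⟨s, hs, hsCC⟩ := hCV (sqrtSeq c) hxG (er.sqrtSeq_le_succ hscal hc hc1)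
    (fun m n => (hxx m n).eq)
    ⟨1, er.one_mem_G, er.sqrtSeq_le_one hscal (er.mem_G_of_mem_Epos hc) hc1⟩
  have hcomm : ∀ k ∈ er.G, (∀ n, Commute k (sqrtSeq c n)) → Commute k s := by
    intro k hk hkx
    exact (hsCC.2 k ⟨hk, by rintro _ ⟨n, rfl⟩; exact (hkx n).eq⟩).symm
  refine ⟨s, by simpa [le, sqrtSeq] using hs.2.1 _ ⟨0, rfl⟩,
    er.mul_self_eq_of_isSupIn_sqrtSeq hscal hc hc1 hs fun n => (hcomm _ (hxG n) (hxx n)).symm,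
    fun k hk hkc => hcomm k hk (commute_sqrtSeq hkc)⟩

lemma exists_sqrt (hscal : er.SMulClosed) (hCV : er.HasCV) (hc : c ∈ er.Epos) :
    ∃ s ∈ er.Epos, s * s = c ∧ ∀ k ∈ er.G, Commute k c → Commute k s := by
  obtain ⟨t, ht, htc⟩ := er.exists_smul_one_sub_mem_Epos hc
  obtain ⟨s, hs, hss, hks⟩ := er.exists_sqrt_of_le_one hscal hCV (hscal t⁻¹ (by positivity) c hc)
    (by simpa [le, smul_sub, ht.ne'] using hscal t⁻¹ (by positivity) _ htc)
  refine ⟨√t • s, hscal _ (Real.sqrt_nonneg t) s hs, ?_, fun k hk hkc => ?_⟩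
  · rw [smul_mul_smul_comm, Real.mul_self_sqrt ht.le, hss, smul_smul, mul_inv_cancel₀ ht.ne',
      one_smul]
  · exact (hks k hk (hkc.smul_right _)).smul_right _

lemma commute_of_mul_self_eq (hscal : er.SMulClosed) (hQA : er.HasQA) (hCV : er.HasCV)
    {m : R} (hm : m ∈ er.Epos) (hmc : m * m = c) {k : R} (hk : k ∈ er.G)
    (hkc : Commute k c) : Commute k m := by
  obtain ⟨s, hs, hss, hks⟩ :=
    er.exists_sqrt hscal hCV (hmc ▸ er.mul_self_mem_Epos (er.mem_G_of_mem_Epos hm))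
  have hsm : s = m := er.eq_of_mul_self_eq hQA hs hm
    (hks m (er.mem_G_of_mem_Epos hm) (hmc ▸ (Commute.refl m).mul_right (Commute.refl m))).symm
    (hss.trans hmc.symm)
  exact hsm ▸ hks k hk hkc

end Sqrt

lemma mem_CC_singleton {R : Type*} [Ring R] {er : ERing R} {g x : R} (hx : x ∈ er.G)
    (h : ∀ k ∈ er.G, Commute k g → Commute k x) : x ∈ er.CC {g} :=
  ⟨hx, fun k hk => (h k hk.1 (hk.2 g rfl)).eq.symm⟩

section PositivePart

variable {R : Type*} [Ring R] [Algebra ℝ R] {er : ERing R}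

lemma IsPosPart.commute (hAH : er.IsAH) (hscal : er.SMulClosed) {b a : R}
    (ha : er.IsPosPart b a) {k : R} (hk : k ∈ er.G) (hkb : Commute k b) : Commute k a := by
  obtain ⟨-, m, ⟨-, hm0, hmsq⟩, haa⟩ := ha
  have hkm : Commute k m := er.commute_of_mul_self_eq hscal hAH.2.1 hAH.2.2
    (by simpa [le] using hm0) (by rw [← sq, hmsq, sq]) hk (hkb.mul_right hkb)
  have h : a = (2⁻¹ : ℝ) • (m + b) := by rw [← haa]; module
  rw [h]
  exact (hkm.add_right hkb).smul_right _

/-- With `n := |b| - a = b⁻`, `b = a - n` and `an = 0`; the carrier `q` of `a` fixes `a` and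
kills `n`, so `a = q|b|q` and `n = (1 - q)|b|(1 - q)`. -/
lemma IsPosPart.carrier_mul_eq (hAH : er.IsAH) (hscal : er.SMulClosed) {b a q : R}
    (hb : b ∈ er.G) (ha : er.IsPosPart b a) (hq : er.IsCarrier a q) :
    q * b = a ∧ a ∈ er.Epos ∧ -((1 - q) * b) ∈ er.Epos := by
  obtain ⟨haG, m, ⟨hmG, hm0, hmsq⟩, haa⟩ := ha
  rw [sq, sq] at hmsq
  have hm : m ∈ er.Epos := by simpa [le] using hm0
  have hmb : Commute m b := (er.commute_of_mul_self_eq hscal hAH.2.1 hAH.2.2 hm hmsq hb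
    ((Commute.refl b).mul_right (Commute.refl b))).symm
  set n := m - a with hn
  have hm_eq : m = a + n := by rw [hn, add_sub_cancel]
  have hbn : b = a - n := by rw [hn, sub_sub_eq_add_sub, haa, add_sub_cancel_left]
  have han : a * n = 0 := by
    have h : (4 : ℝ) • (a * n) = (m + b) * (m - b) := by
      rw [hm_eq, hbn, show a + n + (a - n) = (2 : ℝ) • a by module,
        show a + n - (a - n) = (2 : ℝ) • n by module, smul_mul_smul_comm]
      norm_num
    rwa [← hmb.mul_self_sub_mul_self_eq, hmsq, sub_self, smul_eq_zero_iff_right (by norm_num)] at h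
  have hqn : q * n = 0 := (hq.2 n (er.sub_mem_G hmG haG)).1 han
  have hnq : n * q = 0 := er.mul_eq_zero_comm hAH.2.1 hq.1.1 (er.sub_mem_G hmG haG) hqn
  have hqa := hq.carrier_mul hAH.2.1 haG
  refine ⟨by rw [hbn, mul_sub, hqa, hqn, sub_zero], ?_, ?_⟩
  · have h : q * m * q = a := by rw [hm_eq, mul_add, hqa, hqn, add_zero, hq.mul_carrier]
    exact h ▸ er.mul_mul_self_mem_Epos (er.mem_Epos_of_mem_P hq.1) hm
  · have h : (1 - q) * m * (1 - q) = -((1 - q) * b) := by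
      have h1 : (1 - q) * a = 0 := by rw [sub_mul, one_mul, hqa, sub_self]
      have h2 : (1 - q) * n = n := by rw [sub_mul, one_mul, hqn, sub_zero]
      have h3 : n * (1 - q) = n := by rw [mul_sub, mul_one, hnq, sub_zero]
      rw [hm_eq, hbn, mul_add (1 - q) a n, mul_sub (1 - q) a n, h1, h2, zero_add, zero_sub,
        neg_neg, h3]
    exact h ▸ er.mul_mul_self_mem_Epos (er.mem_Epos_of_mem_P (er.one_sub_mem_P hq.1)) hm

end PositivePart

section SpectralProjection

variable {R : Type*} [Ring R] [Algebra ℝ R] {er : ERing R} {g p d : R} {l : ℝ}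
variable (hAH : er.IsAH) (hscal : er.SMulClosed) (hg : g ∈ er.G)

lemma IsSpecProj.mem_P (hp : er.IsSpecProj g l p) : p ∈ er.P := by
  obtain ⟨_, _, q, hq, rfl⟩ := hp
  exact er.one_sub_mem_P hq.1

include hAH hscal in
lemma IsSpecProj.commute (hp : er.IsSpecProj g l p) {k : R} (hk : k ∈ er.G)
    (hkg : Commute k g) : Commute k p := by
  obtain ⟨a, ha, q, hq, rfl⟩ := hp
  exact (Commute.one_right k).sub_right
    (hq.commute hAH.2.1 hk (ha.commute hAH hscal hk (hkg.sub_smul_one_right l)))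

include hAH hscal hg in
lemma IsSpecProj.neg_mul_mem_Epos (hp : er.IsSpecProj g l p) :
    -(p * (g - l • 1)) ∈ er.Epos := by
  obtain ⟨a, ha, q, hq, rfl⟩ := hp
  exact (ha.carrier_mul_eq hAH hscal (er.sub_smul_one_mem_G hscal hg l) hq).2.2

include hAH hscal hg in
lemma IsSpecProj.one_sub_mul_mem_Epos (hp : er.IsSpecProj g l p) :
    (1 - p) * (g - l • 1) ∈ er.Epos := by
  obtain ⟨a, ha, q, hq, rfl⟩ := hp
  obtain ⟨hqb, haE, -⟩ := ha.carrier_mul_eq hAH hscal (er.sub_smul_one_mem_G hscal hg l) hq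
  rwa [sub_sub_cancel, hqb]

include hAH hscal hg in
lemma IsSpecProj.one_sub_mul_eq_zero (hp : er.IsSpecProj g l p) {h : R} (hh : h ∈ er.G)
    (h0 : (1 - p) * (g - l • 1) * h = 0) : (1 - p) * h = 0 := by
  obtain ⟨a, ha, q, hq, rfl⟩ := hp
  rw [sub_sub_cancel] at h0 ⊢
  rw [(ha.carrier_mul_eq hAH hscal (er.sub_smul_one_mem_G hscal hg l) hq).1] at h0
  exact (hq.2 h hh).1 h0

lemma IsEigenProj.mem_P (hd : er.IsEigenProj g l d) : d ∈ er.P := by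
  obtain ⟨e, he, rfl⟩ := hd
  exact er.one_sub_mem_P he.1

include hAH in
lemma IsEigenProj.commute (hd : er.IsEigenProj g l d) {k : R} (hk : k ∈ er.G)
    (hkg : Commute k g) : Commute k d := by
  obtain ⟨e, he, rfl⟩ := hd
  exact (Commute.one_right k).sub_right (he.commute hAH.2.1 hk (hkg.sub_smul_one_right l))

lemma IsEigenProj.sub_smul_one_mul_eq_zero (hd : er.IsEigenProj g l d) :
    (g - l • 1) * d = 0 := by
  obtain ⟨e, he, rfl⟩ := hd
  rw [mul_sub, mul_one, he.mul_carrier, sub_self]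

end SpectralProjection

section Resolution

variable {R : Type*} [Ring R] [Algebra ℝ R] {er : ERing R} {g p p' d : R} {l mu : ℝ}
variable (hAH : er.IsAH) (hscal : er.SMulClosed) (hg : g ∈ er.G)

include hAH hscal hg

lemma IsSpecProj.commute_sub_smul_one (hp : er.IsSpecProj g l p) (t : ℝ) : Commute p (g - t • 1) :=
  (hp.commute hAH hscal hg (Commute.refl g)).symm.sub_smul_one_right t

lemma IsSpecProj.commute_specProj (hp : er.IsSpecProj g l p) (hp' : er.IsSpecProj g mu p') :
    Commute p p' :=
  hp'.commute hAH hscal hp.mem_P.1 (hp.commute hAH hscal hg (Commute.refl g)).symm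

lemma IsEigenProj.commute_specProj (hd : er.IsEigenProj g mu d) (hp : er.IsSpecProj g l p) :
    Commute d p :=
  hp.commute hAH hscal hd.mem_P.1 (hd.commute hAH hg (Commute.refl g)).symm

lemma IsSpecProj.mul_sub_smul_le_zero (hp : er.IsSpecProj g l p) : er.le (p * g - l • p) 0 := by
  rw [le, zero_sub, show p * g - l • p = p * (g - l • 1) by rw [mul_sub, mul_smul_comm, mul_one]]
  exact hp.neg_mul_mem_Epos hAH hscal hg

lemma IsSpecProj.zero_le_one_sub_mul_sub_smul (hp : er.IsSpecProj g l p) :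
    er.le 0 ((1 - p) * g - l • (1 - p)) := by
  rw [le, sub_zero, show (1 - p) * g - l • (1 - p) = (1 - p) * (g - l • 1) by
    rw [mul_sub (1 - p) g, mul_smul_comm, mul_one]]
  exact hp.one_sub_mul_mem_Epos hAH hscal hg

/-- `(1 - p') (g - μ) p` is both `≥ 0` and `≤ 0`; the carrier property of `1 - p'` turns its
vanishing into `(1 - p') p = 0`. -/
lemma IsSpecProj.mul_eq_of_le (hp : er.IsSpecProj g l p) (hp' : er.IsSpecProj g mu p')
    (hlmu : l ≤ mu) : p' * p = p := by
  have hpos := er.mem_Epos_of_mem_P hp.mem_P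
  have hpos' := er.mem_Epos_of_mem_P (er.one_sub_mem_P hp'.mem_P)
  have hcomm : Commute (1 - p') p :=
    (Commute.one_left p).sub_left (hp'.commute_specProj hAH hscal hg hp)
  have hx : (1 - p') * (g - mu • 1) * p ∈ er.Epos :=
    er.mul_mem_Epos (hp'.one_sub_mul_mem_Epos hAH hscal hg) hpos
      (hcomm.symm.mul_right (hp.commute_sub_smul_one hAH hscal hg mu)).symm
  have hnx : -((1 - p') * (g - mu • 1) * p) =
      (1 - p') * -(p * (g - l • 1)) + (mu - l) • ((1 - p') * p) := by
    rw [mul_assoc, ← (hp.commute_sub_smul_one hAH hscal hg mu).eq,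
      show p * (g - mu • 1) = p * (g - l • 1) - (mu - l) • p by
        simp only [mul_sub, mul_smul_comm, mul_one, sub_smul]; abel,
      mul_sub, mul_smul_comm, mul_neg]
    abel
  have hnx' : -((1 - p') * (g - mu • 1) * p) ∈ er.Epos := by
    rw [hnx]
    refine er.add_mem_Epos (er.mul_mem_Epos hpos' (hp.neg_mul_mem_Epos hAH hscal hg) ?_)
      (hscal _ (sub_nonneg.2 hlmu) _ (er.mul_mem_Epos hpos' hpos hcomm))
    exact (hcomm.mul_right
      ((Commute.one_left _).sub_left (hp'.commute_sub_smul_one hAH hscal hg l))).neg_right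
  have h := hp'.one_sub_mul_eq_zero hAH hscal hg hp.mem_P.1
    (er.eq_zero_of_mem_Epos_of_neg_mem hx hnx')
  rw [sub_mul, one_mul, sub_eq_zero] at h
  exact h.symm

lemma IsSpecProj.le_of_le (hp : er.IsSpecProj g l p) (hp' : er.IsSpecProj g mu p')
    (hlmu : l ≤ mu) : er.le p p' := by
  have h := hp.mul_eq_of_le hAH hscal hg hp' hlmu
  have hcomm := hp.commute_specProj hAH hscal hg hp'
  exact er.le_of_mul_eq hp.mem_P hp'.mem_P (hcomm.eq.trans h) h

lemma IsEigenProj.le_specProj (hd : er.IsEigenProj g l d) (hp : er.IsSpecProj g l p) :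
    er.le d p := by
  have h := hp.one_sub_mul_eq_zero hAH hscal hg hd.mem_P.1
    (by rw [mul_assoc, hd.sub_smul_one_mul_eq_zero, mul_zero])
  rw [sub_mul, one_mul, sub_eq_zero] at h
  have hcomm := hd.commute_specProj hAH hscal hg hp
  exact er.le_of_mul_eq hd.mem_P hp.mem_P (hcomm.eq.trans h.symm) h.symm

/-- `z = d p ≥ 0` satisfies `(g - λ) z = (μ - λ) z` (as `(g - μ) d = 0`) and `(g - λ) z ≤ 0`
(as `p (g - λ) ≤ 0`), so `z = 0`. -/
lemma IsSpecProj.le_one_sub_eigenProj (hp : er.IsSpecProj g l p) (hd : er.IsEigenProj g mu d)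
    (hlmu : l < mu) : er.le p (1 - d) := by
  have hcomm := hd.commute_specProj hAH hscal hg hp
  have hdb : Commute d (g - l • 1) :=
    (hd.commute hAH hg (Commute.refl g)).symm.sub_smul_one_right l
  have hz : d * p ∈ er.Epos :=
    er.mul_mem_Epos (er.mem_Epos_of_mem_P hd.mem_P) (er.mem_Epos_of_mem_P hp.mem_P) hcomm
  have hbz : (g - l • 1) * (d * p) = (mu - l) • (d * p) := by
    rw [show g - l • (1 : R) = (g - mu • 1) + (mu - l) • 1 by rw [sub_smul]; abel, add_mul,
      ← mul_assoc, hd.sub_smul_one_mul_eq_zero, zero_mul, zero_add, smul_mul_assoc, one_mul]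
  have hneg : -((mu - l) • (d * p)) ∈ er.Epos := by
    rw [← hbz, ← mul_assoc, ← hdb.eq, mul_assoc, ← (hp.commute_sub_smul_one hAH hscal hg l).eq, ← mul_neg]
    exact er.mul_mem_Epos (er.mem_Epos_of_mem_P hd.mem_P) (hp.neg_mul_mem_Epos hAH hscal hg)
      (hcomm.mul_right hdb).neg_right
  have h0 := er.eq_zero_of_mem_Epos_of_neg_mem (hscal _ (sub_nonneg.2 hlmu.le) _ hz) hneg
  rw [smul_eq_zero_iff_right (sub_ne_zero.2 hlmu.ne')] at h0
  have h1 : (1 - d) * p = p := by rw [sub_mul, one_mul, h0, sub_zero]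
  exact er.le_of_mul_eq hp.mem_P (er.one_sub_mem_P hd.mem_P)
    (((Commute.one_left p).sub_left hcomm).eq.symm.trans h1) h1

lemma IsSpecProj.eq_one_of_specU_lt (hp : er.IsSpecProj g l p) (hU : er.specU g < l) : p = 1 := by
  obtain ⟨t, htl, hgt⟩ := er.exists_le_smul_one_lt_of_specU_lt hg hU
  have hle : er.le (g - l • 1) ((t - l) • 1) := by
    rwa [le, sub_smul, sub_sub_sub_cancel_right]
  have h := er.eq_zero_of_mul_mem_Epos_of_le hscal (er.one_sub_mem_P hp.mem_P)
    ((Commute.one_left _).sub_left (hp.commute_sub_smul_one hAH hscal hg l))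
    (hp.one_sub_mul_mem_Epos hAH hscal hg) hle (sub_neg.2 htl)
  exact (sub_eq_zero.1 h).symm

lemma IsSpecProj.ne_one_of_lt_specU (hp : er.IsSpecProj g l p) (hU : l < er.specU g) : p ≠ 1 := by
  rintro rfl
  have h := hp.neg_mul_mem_Epos hAH hscal hg
  rw [one_mul, neg_sub] at h
  exact (er.specU_le hscal hg h).not_gt hU

lemma IsSpecProj.eq_zero_of_lt_specL (hp : er.IsSpecProj g l p) (hL : l < er.specL g) : p = 0 := by
  obtain ⟨t, htl, htg⟩ := er.exists_lt_smul_one_le_of_lt_specL hg hL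
  have hle : er.le (-(g - l • 1)) ((l - t) • 1) := by
    rwa [le, show (l - t) • (1 : R) - -(g - l • 1) = g - t • 1 by rw [sub_smul]; abel]
  exact er.eq_zero_of_mul_mem_Epos_of_le hscal hp.mem_P (hp.commute_sub_smul_one hAH hscal hg l).neg_right
    (by rw [mul_neg]; exact hp.neg_mul_mem_Epos hAH hscal hg) hle (sub_neg.2 htl)

lemma IsSpecProj.ne_zero_of_specL_lt (hp : er.IsSpecProj g l p) (hL : er.specL g < l) : p ≠ 0 := by
  rintro rfl
  have h := hp.one_sub_mul_mem_Epos hAH hscal hg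
  rw [sub_zero, one_mul] at h
  exact (er.le_specL hscal hg h).not_gt hL

lemma IsSpecProj.smul_le_mul_mul_self (hp : er.IsSpecProj g l p) (hp' : er.IsSpecProj g mu p')
    (hlmu : l ≤ mu) {w : R} (hw : w ∈ er.P) (hwp : er.le w (p' - p)) :
    er.le (l • w) (w * g * w) := by
  have hpp := hp.mul_eq_of_le hAH hscal hg hp' hlmu
  have hcomm := hp.commute_specProj hAH hscal hg hp'
  have he := er.sub_mem_P hp.mem_P hp'.mem_P (hcomm.eq.trans hpp) hpp
  rw [le, show w * g * w - l • w = w * (g - l • 1) * w by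
    rw [mul_sub, sub_mul, mul_smul_comm, smul_mul_assoc, mul_one,
      (er.isIdempotentElem_of_mem_P hw).eq]]
  refine er.mul_mul_self_mem_Epos_of_le hw he hwp ?_
  rw [show (p' - p) * (g - l • 1) = p' * ((1 - p) * (g - l • 1)) by
    rw [← mul_assoc, mul_sub p' 1 p, mul_one, hpp]]
  exact er.mul_mem_Epos (er.mem_Epos_of_mem_P hp'.mem_P) (hp.one_sub_mul_mem_Epos hAH hscal hg)
    (((Commute.one_right p').sub_right hcomm.symm).mul_right (hp'.commute_sub_smul_one hAH hscal hg l))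

lemma IsSpecProj.mul_mul_self_le_smul (hp : er.IsSpecProj g l p) (hp' : er.IsSpecProj g mu p')
    (hlmu : l ≤ mu) {w : R} (hw : w ∈ er.P) (hwp : er.le w (p' - p)) :
    er.le (w * g * w) (mu • w) := by
  have hpp := hp.mul_eq_of_le hAH hscal hg hp' hlmu
  have hcomm := hp.commute_specProj hAH hscal hg hp'
  have he := er.sub_mem_P hp.mem_P hp'.mem_P (hcomm.eq.trans hpp) hpp
  rw [le, show mu • w - w * g * w = w * -(g - mu • 1) * w by
    rw [mul_neg, neg_mul, mul_sub, sub_mul, mul_smul_comm, smul_mul_assoc, mul_one,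
      (er.isIdempotentElem_of_mem_P hw).eq, neg_sub]]
  refine er.mul_mul_self_mem_Epos_of_le hw he hwp ?_
  rw [show (p' - p) * -(g - mu • 1) = (1 - p) * -(p' * (g - mu • 1)) by
    rw [mul_neg, mul_neg, ← mul_assoc, sub_mul 1 p p', one_mul, hcomm.eq.trans hpp]]
  exact er.mul_mem_Epos (er.mem_Epos_of_mem_P (er.one_sub_mem_P hp.mem_P))
    (hp'.neg_mul_mem_Epos hAH hscal hg) (((Commute.one_left p').sub_left hcomm).mul_right
      ((Commute.one_left _).sub_left (hp.commute_sub_smul_one hAH hscal hg mu))).neg_right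

end Resolution

end ERing

/-- Properties of the spectral resolution `(p_λ)` and
eigenprojections `(d_λ)` of `g` in an AH-algebra (with real scalars). -/
theorem stmt15 {R : Type*} [Ring R] [Algebra ℝ R] (er : ERing R) (hAH : er.IsAH)
    (hscal : ∀ l : ℝ, 0 ≤ l → ∀ a ∈ er.Epos, l • a ∈ er.Epos)
    (g : R) (hg : g ∈ er.G) (p d : ℝ → R)
    (hp : ∀ l : ℝ, er.IsSpecProj g l (p l))
    (hd : ∀ l : ℝ, er.IsEigenProj g l (d l)) :
    ∀ l mu : ℝ,
      (p l ∈ er.P ∧ p l ∈ er.CC {g} ∧ d l ∈ er.P ∧ d l ∈ er.CC {g}) ∧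
      (er.le (p l * g - l • p l) 0 ∧
        er.le 0 ((1 - p l) * g - l • (1 - p l))) ∧
      (l ≤ mu → er.le (p l) (p mu)) ∧
      (l < mu → er.le (d l) (p l) ∧ er.le (p l) (1 - d mu)) ∧
      (er.specU g < l → p l = 1) ∧
      (l < er.specU g → er.le (p l) 1 ∧ p l ≠ 1) ∧
      (l < er.specL g → p l = 0) ∧
      (er.specL g < l → er.le 0 (p l) ∧ p l ≠ 0) ∧
      (l ≤ mu → ∀ q ∈ er.P, er.le q (p mu - p l) →
        er.le (l • q) (q * g * q) ∧ er.le (q * g * q) (mu • q)) := by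
  intro l mu
  have hpl := hp l
  refine ⟨⟨hpl.mem_P, ERing.mem_CC_singleton hpl.mem_P.1 fun k hk => hpl.commute hAH hscal hk,
      (hd l).mem_P, ERing.mem_CC_singleton (hd l).mem_P.1 fun k hk => (hd l).commute hAH hk⟩,
    ⟨hpl.mul_sub_smul_le_zero hAH hscal hg, hpl.zero_le_one_sub_mul_sub_smul hAH hscal hg⟩,
    hpl.le_of_le hAH hscal hg (hp mu),
    fun h => ⟨(hd l).le_specProj hAH hscal hg hpl, hpl.le_one_sub_eigenProj hAH hscal hg (hd mu) h⟩,
    hpl.eq_one_of_specU_lt hAH hscal hg,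
    fun h => ⟨er.le_one_of_mem_P hpl.mem_P, hpl.ne_one_of_lt_specU hAH hscal hg h⟩,
    hpl.eq_zero_of_lt_specL hAH hscal hg,
    fun h => ⟨er.zero_le_of_mem_P hpl.mem_P, hpl.ne_zero_of_specL_lt hAH hscal hg h⟩,
    fun h q hq hqle => ⟨hpl.smul_le_mul_mul_self hAH hscal hg (hp mu) h hq hqle,
      hpl.mul_mul_self_le_smul hAH hscal hg (hp mu) h hq hqle⟩⟩
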